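/- Consider the 'delayed death' Markov chain on ℕ = {0,1,2,…} with transition probabilities P(x,x) = θ_x and P(x,x−1) = 1 − θ_x for x ≥ 1, and P(0,y) = ζ_y for y ∈ ℕ, where θ_x = 1 − κ(x+1)^{−λ} with 0 < κ ≤ 1 and λ > 1, and (ζ_y)_{y∈ℕ} is a probability distribution on ℕ with Σ_y ζ_y·(y+1)^{2λ} < ∞. Set V(x) = (x+1)^{2λ} and α = (λ−1)/(2λ). Then there exist c > 0, b < ∞ and x₀ ∈ ℕ such that Σ_y P(x,y)·V(y) ≤ V(x) − c·V(x)^α + b·1_{[x ≤ x₀]} for all x ∈ ℕ. -/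

import Mathlib

/-!
For `x ≥ 1` the chain only holds or steps down, so with `q = κ (x+1)^{-λ}`,
`PV(x) = V(x) - q (V(x) - V(x-1))`. Since `x^{2λ} ≤ x (x+1)^{2λ-1}`, the increment
`V(x) - V(x-1)` is at least `(x+1)^{2λ-1}`, hence the drift is at least
`κ (x+1)^{λ-1} = κ V(x)^α`.
At `x = 0` any finite bound on `PV(0)` serves as `b`.
-/

open Real

lemma sub_mul_rpow_sub_one_le_rpow_sub_rpow {a b p : ℝ} (ha : 0 ≤ a) (hab : a ≤ b) (hp : 1 ≤ p) :
    (b - a) * b ^ (p - 1) ≤ b ^ p - a ^ p := by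
  have hsplit : ∀ c : ℝ, 0 ≤ c → c ^ p = c * c ^ (p - 1) := fun c hc => by
    rw [← rpow_one_add' hc (by linarith)]
    ring_nf
  have hmono : a ^ (p - 1) ≤ b ^ (p - 1) := rpow_le_rpow ha hab (by linarith)
  rw [hsplit a ha, hsplit b (ha.trans hab)]
  nlinarith

lemma rpow_rpow_div_of_ne_zero {b p : ℝ} (hb : 0 ≤ b) (hp : p ≠ 0) (r : ℝ) :
    (b ^ p) ^ (r / p) = b ^ r := by
  rw [← rpow_mul hb, mul_div_cancel₀ r hp]

lemma tsum_mul_of_eq_zero_of_ne_of_ne_sub_one {P : ℕ → ℕ → ℝ} {x : ℕ} (hx : 1 ≤ x)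
    (hPoff : ∀ y, y ≠ x → y ≠ x - 1 → P x y = 0) (f : ℕ → ℝ) :
    ∑' y, P x y * f y = P x (x - 1) * f (x - 1) + P x x * f x := by
  rw [tsum_eq_sum (s := {x - 1, x}), Finset.sum_pair (by omega)]
  intro y hy
  simp only [Finset.mem_insert, Finset.mem_singleton, not_or] at hy
  rw [hPoff y hy.2 hy.1, zero_mul]

lemma hold_or_step_down_drift_le {κ lam t : ℝ} (hκ : 0 ≤ κ) (hlam : 1 / 2 ≤ lam) (ht : 0 ≤ t) :
    κ * (t + 1) ^ (-lam) * t ^ (2 * lam) + (1 - κ * (t + 1) ^ (-lam)) * (t + 1) ^ (2 * lam)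
      ≤ (t + 1) ^ (2 * lam) - κ * ((t + 1) ^ (2 * lam)) ^ ((lam - 1) / (2 * lam)) := by
  have ht1 : 0 < t + 1 := by linarith
  set q := κ * (t + 1) ^ (-lam)
  have hq : 0 ≤ q := mul_nonneg hκ (rpow_nonneg ht1.le _)
  have hgap : (t + 1) ^ (2 * lam - 1) ≤ (t + 1) ^ (2 * lam) - t ^ (2 * lam) := by
    simpa using sub_mul_rpow_sub_one_le_rpow_sub_rpow ht (le_add_of_nonneg_right zero_le_one)
      (by linarith : 1 ≤ 2 * lam)
  have hdrift :
      κ * ((t + 1) ^ (2 * lam)) ^ ((lam - 1) / (2 * lam)) = q * (t + 1) ^ (2 * lam - 1) := by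
    rw [rpow_rpow_div_of_ne_zero ht1.le (by positivity), mul_assoc, ← rpow_add ht1]
    ring_nf
  rw [hdrift]
  nlinarith [mul_le_mul_of_nonneg_left hgap hq]

theorem stmt_14 (κ lam : ℝ) (hκ : 0 < κ) (hlam : 1 < lam)
    (θ : ℕ → ℝ) (hθ : ∀ x : ℕ, θ x = 1 - κ * ((x : ℝ) + 1) ^ (-lam))
    (P : ℕ → ℕ → ℝ)
    (hPxx : ∀ x : ℕ, 1 ≤ x → P x x = θ x)
    (hPdown : ∀ x : ℕ, 1 ≤ x → P x (x - 1) = 1 - θ x)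
    (hPoff : ∀ x : ℕ, 1 ≤ x → ∀ y : ℕ, y ≠ x → y ≠ x - 1 → P x y = 0) :
    ∃ c : ℝ, 0 < c ∧ ∃ b : ℝ, ∃ x₀ : ℕ, ∀ x : ℕ,
      (∑' y : ℕ, P x y * ((y : ℝ) + 1) ^ (2 * lam))
        ≤ ((x : ℝ) + 1) ^ (2 * lam)
          - c * (((x : ℝ) + 1) ^ (2 * lam)) ^ ((lam - 1) / (2 * lam))
          + (if x ≤ x₀ then b else 0) := by
  refine ⟨κ, hκ, (∑' y : ℕ, P 0 y * ((y : ℝ) + 1) ^ (2 * lam)) + κ, 0, fun x => ?_⟩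
  rcases Nat.eq_zero_or_pos x with rfl | hx
  · simp
  · rw [tsum_mul_of_eq_zero_of_ne_of_ne_sub_one hx (hPoff x hx), hPdown x hx, hPxx x hx, hθ x,
      Nat.cast_pred hx, sub_add_cancel, if_neg (by omega), add_zero]
    have := hold_or_step_down_drift_le (lam := lam) hκ.le (by linarith) (Nat.cast_nonneg' x)
    linarith
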